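/- Suppose a Hausdorff locally convex space E possesses the bounded approximation property. Then the trace of every Fredholm operator on E is well-defined: any two Fredholm representations of the same operator yield the same value ∑_{i=1}^∞ λ_i ⟨x'_i, x_i⟩. Moreover, if a net {A_ν} of weakly continuous operators converges to A in the weak operator topology and is bounded in that topology, then tr(F∘A_ν) → tr(F∘A) for every Fredholm operator F on E. -/

import Mathlib

/-
Setting: `E` is a Hausdorff locally convex topological vector space over `𝕜 = ℝ` or `ℂ`
(`RCLike 𝕜`), with `E' = E →L[𝕜] 𝕜` its (strong) dual.
-/

open Filter Topology Bornology

section Prelude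

variable (𝕜 : Type) [RCLike 𝕜]

/-- A continuous linear operator on `E` is of finite rank if its range is
finite-dimensional. -/
def IsFiniteRank {E : Type} [AddCommGroup E] [Module 𝕜 E] [TopologicalSpace E]
    (A : E →L[𝕜] E) : Prop :=
  FiniteDimensional 𝕜 (LinearMap.range (A : E →ₗ[𝕜] E))

/-- The ordinary trace `sp` of a (finite-rank) operator: the trace of the endomorphism
that it induces on its image. -/
noncomputable def sp {E : Type} [AddCommGroup E] [Module 𝕜 E] [TopologicalSpace E]
    (A : E →L[𝕜] E) : 𝕜 :=
  LinearMap.trace 𝕜 (LinearMap.range (A : E →ₗ[𝕜] E))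
    ((A : E →ₗ[𝕜] E).restrict (fun x _ => LinearMap.mem_range_self _ x))

/-- The bounded approximation property: there is a net of finite-rank operators that
converges to the identity operator in the weak operator topology and is bounded in
that topology. -/
def HasBAP (E : Type) [AddCommGroup E] [Module 𝕜 E] [TopologicalSpace E] : Prop :=
  ∃ (ι : Type) (lfil : Filter ι) (T : ι → E →L[𝕜] E), lfil.NeBot ∧
    (∀ ν, IsFiniteRank 𝕜 (T ν)) ∧
    (∀ (x : E) (f : E →L[𝕜] 𝕜), Tendsto (fun ν => f (T ν x)) lfil (𝓝 (f x))) ∧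
    (∀ (x : E) (f : E →L[𝕜] 𝕜), ∃ C : ℝ, ∀ ν, ‖f (T ν x)‖ ≤ C)

/-- The approximation property: the finite-rank operators are dense in `L(E)` for the
topology of uniform convergence on precompact (totally bounded) subsets of `E`. -/
def HasAP (E : Type) [AddCommGroup E] [Module 𝕜 E] [UniformSpace E] : Prop :=
  ∀ (A : E →L[𝕜] E) (S : Set E), TotallyBounded S → ∀ U ∈ 𝓝 (0 : E),
    ∃ F : E →L[𝕜] E, IsFiniteRank 𝕜 F ∧ ∀ x ∈ S, A x - F x ∈ U

/-- The weak approximation property: the finite-rank operators are dense in `L(E)` for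
the topology of uniform convergence on absolutely convex compact subsets of `E`. -/
def HasWeakAP (E : Type) [AddCommGroup E] [Module 𝕜 E] [Module ℝ E]
    [TopologicalSpace E] : Prop :=
  ∀ (A : E →L[𝕜] E) (K : Set E), IsCompact K → Balanced 𝕜 K → Convex ℝ K →
    ∀ U ∈ 𝓝 (0 : E), ∃ F : E →L[𝕜] E, IsFiniteRank 𝕜 F ∧ ∀ x ∈ K, A x - F x ∈ U

/-- A linear operator is weakly continuous iff the composition with every continuous
linear functional is again a continuous linear functional. -/
def IsWeaklyContinuous {E : Type} [AddCommGroup E] [Module 𝕜 E] [TopologicalSpace E]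
    (A : E →ₗ[𝕜] E) : Prop :=
  ∀ f : E →L[𝕜] 𝕜, Continuous fun v => f (A v)

/-- `B` is an absolutely convex bounded set such that the normed space `E_B`
(the span of `B` with the gauge of `B` as norm) is complete, i.e. a Banach disk.
(Completeness of the normed space `E_B` is expressed as sequential completeness for
the gauge of `B`, which is equivalent since `E_B` is metrizable.) -/
def IsBanachDisk {V : Type} [AddCommGroup V] [Module 𝕜 V] [Module ℝ V]
    [TopologicalSpace V] (B : Set V) : Prop :=
  Balanced 𝕜 B ∧ Convex ℝ B ∧ IsVonNBounded 𝕜 B ∧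
    ∀ u : ℕ → V, (∀ n, u n ∈ Submodule.span 𝕜 B) →
      (∀ ε : ℝ, 0 < ε → ∃ N : ℕ, ∀ m ≥ N, ∀ n ≥ N, gauge B (u m - u n) < ε) →
      ∃ v ∈ Submodule.span 𝕜 B, ∀ ε : ℝ, 0 < ε → ∃ N : ℕ, ∀ n ≥ N, gauge B (v - u n) < ε

/-- The data of a Fredholm kernel: a summable sequence of scalars, a sequence in a
Banach disk `B ⊆ E` and a sequence in a Banach disk `B' ⊆ E'`. -/
def FredholmKernelSeqs {E : Type} [AddCommGroup E] [Module 𝕜 E] [Module ℝ E]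
    [TopologicalSpace E] [IsTopologicalAddGroup E]
    (l : ℕ → 𝕜) (x : ℕ → E) (x' : ℕ → E →L[𝕜] 𝕜) : Prop :=
  (Summable fun i => ‖l i‖) ∧
  (∃ B : Set E, IsBanachDisk 𝕜 B ∧ ∀ i, x i ∈ B) ∧
  (∃ B' : Set (E →L[𝕜] 𝕜), IsBanachDisk 𝕜 B' ∧ ∀ i, x' i ∈ B')

/-- `A` is represented as the Fredholm operator `v ↦ ∑_{i=1}^∞ λ_i ⟨x'_i, v⟩ x_i`,
where `∑ |λ_i| < ∞`, `{x_i} ⊆ B ⊆ E` and `{x'_i} ⊆ B' ⊆ E'` with `B`, `B'` absolutely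
convex bounded sets such that `E_B` and `E'_{B'}` are complete. -/
def FredholmRep {E : Type} [AddCommGroup E] [Module 𝕜 E] [Module ℝ E]
    [TopologicalSpace E] [IsTopologicalAddGroup E]
    (A : E → E) (l : ℕ → 𝕜) (x : ℕ → E) (x' : ℕ → E →L[𝕜] 𝕜) : Prop :=
  FredholmKernelSeqs 𝕜 l x x' ∧
  ∀ v : E, Tendsto (fun n => ∑ i ∈ Finset.range n, (l i * x' i v) • x i) atTop (𝓝 (A v))

/-- `A` is represented as the nuclear operator `v ↦ ∑_{i=1}^∞ λ_i ⟨x'_i, v⟩ x_i`,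
where `∑ |λ_i| < ∞`, `{x_i}` lies in an absolutely convex bounded complete set `B ⊆ E`
and `{x'_i}` is equicontinuous, i.e. lies in the polar of a neighborhood of zero. -/
def NuclearRep {E : Type} [AddCommGroup E] [Module 𝕜 E] [Module ℝ E]
    [UniformSpace E] [IsUniformAddGroup E]
    (A : E → E) (l : ℕ → 𝕜) (x : ℕ → E) (x' : ℕ → E →L[𝕜] 𝕜) : Prop :=
  (Summable fun i => ‖l i‖) ∧
  (∃ B : Set E, Balanced 𝕜 B ∧ Convex ℝ B ∧ IsVonNBounded 𝕜 B ∧ IsComplete B ∧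
    ∀ i, x i ∈ B) ∧
  (∃ U ∈ 𝓝 (0 : E), ∀ i, ∀ v ∈ U, ‖(x' i) v‖ ≤ 1) ∧
  ∀ v : E, Tendsto (fun n => ∑ i ∈ Finset.range n, (l i * x' i v) • x i) atTop (𝓝 (A v))

end Prelude

/-!
Everything rests on one uniform bound: if `(A_ν)` is a weakly bounded family of weakly continuous
operators and `B ⊆ E`, `B' ⊆ E'` are Banach disks, then `|⟨f, A_ν b⟩|` is bounded uniformly in
`ν`, `f ∈ B'` and `b ∈ B`. It comes from the Banach–Steinhaus theorem applied twice, first in the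
Banach space `E'_{B'}` and then in `E_B`, each normed by the gauge of its disk. Dominated
convergence then gives `tr (F ∘ A_ν) → tr (F ∘ A)`.

For a finite-rank `T = ∑ₖ fₖ ⊗ eₖ` the value `∑ λᵢ ⟨x'ᵢ, T xᵢ⟩ = ∑ₖ ⟨fₖ, F eₖ⟩` depends only on
`F`, not on its representation. Taking for `A_ν` the finite-rank net `T_ν → id` of the bounded
approximation property, both traces of `F` are limits of the same net.
-/

section Gauge

open Set Pointwise

variable {𝕜 : Type} [RCLike 𝕜] {W : Type} [AddCommGroup W] [Module 𝕜 W] [Module ℝ W]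
  [IsScalarTower ℝ 𝕜 W]

lemma Balanced.exists_pos_mem_smul_of_mem_span {B : Set W} (hb : Balanced 𝕜 B)
    (hc : Convex ℝ B) (h0 : (0 : W) ∈ B) {v : W} (hv : v ∈ Submodule.span 𝕜 B) :
    ∃ r : ℝ, 0 < r ∧ v ∈ r • B := by
  induction hv using Submodule.span_induction with
  | mem z hz => exact ⟨1, one_pos, by simpa using hz⟩
  | zero => exact ⟨1, one_pos, by simpa using h0⟩
  | add z w _ _ ihz ihw =>
    obtain ⟨r, hr, hzr⟩ := ihz
    obtain ⟨s, hs, hws⟩ := ihw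
    exact ⟨r + s, by positivity, hc.add_smul hr.le hs.le ▸ add_mem_add hzr hws⟩
  | smul c z _ ih =>
    obtain ⟨r, hr, b, hb', rfl⟩ := ih
    have hcb : c • b ∈ (‖c‖ + 1) • B := by
      rw [← IsScalarTower.algebraMap_smul 𝕜]
      refine hb.smul_mono ?_ (smul_mem_smul_set hb')
      rw [RCLike.algebraMap_eq_ofReal, RCLike.norm_ofReal, abs_of_pos (by positivity)]
      linarith
    refine ⟨r * (‖c‖ + 1), by positivity, ?_⟩
    rw [smul_comm, mul_smul]
    exact smul_mem_smul_set hcb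

lemma norm_apply_le_mul_gauge {s : Set W} (hs : Absorbent ℝ s) (φ : W →ₗ[𝕜] 𝕜) {M : ℝ}
    (hM : ∀ b ∈ s, ‖φ b‖ ≤ M) (w : W) : ‖φ w‖ ≤ M * gauge s w := by
  have hM0 : 0 ≤ M := by simpa using hM 0 hs.zero_mem
  have hlim : Tendsto (M * ·) (𝓝[>] (gauge s w)) (𝓝 (M * gauge s w)) :=
    ((continuous_const_mul M).tendsto _).mono_left nhdsWithin_le_nhds
  refine ge_of_tendsto hlim (eventually_nhdsWithin_of_forall fun r (hr : gauge s w < r) => ?_)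
  obtain ⟨a, ha, har, b, hb, rfl⟩ := exists_lt_of_gauge_lt hs hr
  rw [LinearMap.map_smul_of_tower, norm_smul, Real.norm_of_nonneg ha.le, mul_comm M]
  exact mul_le_mul har.le (hM b hb) (norm_nonneg _) (ha.le.trans har.le)

end Gauge

/-- The span `E_B` of `B`, as a separate type so that it can carry the gauge seminorm of `B`
instead of the topology induced from `V`. -/
def GaugeSpan (𝕜 : Type) [RCLike 𝕜] {V : Type} [AddCommGroup V] [Module 𝕜 V] (B : Set V) :
    Type :=
  Submodule.span 𝕜 B

namespace GaugeSpan

open Set Pointwise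

variable {𝕜 : Type} [RCLike 𝕜] {V : Type} [AddCommGroup V] [Module 𝕜 V] {B : Set V}

instance : AddCommGroup (GaugeSpan 𝕜 B) := inferInstanceAs (AddCommGroup (Submodule.span 𝕜 B))

instance : Module 𝕜 (GaugeSpan 𝕜 B) := inferInstanceAs (Module 𝕜 (Submodule.span 𝕜 B))

def subtype : GaugeSpan 𝕜 B →ₗ[𝕜] V := (Submodule.span 𝕜 B).subtype

lemma subtype_mem (w : GaugeSpan 𝕜 B) : subtype w ∈ Submodule.span 𝕜 B :=
  (show Submodule.span 𝕜 B from w).2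

lemma exists_subtype_eq {v : V} (hv : v ∈ Submodule.span 𝕜 B) :
    ∃ w : GaugeSpan 𝕜 B, subtype w = v :=
  ⟨(⟨v, hv⟩ : Submodule.span 𝕜 B), rfl⟩

variable [Module ℝ V] [IsScalarTower ℝ 𝕜 V]

instance : Module ℝ (GaugeSpan 𝕜 B) := inferInstanceAs (Module ℝ (Submodule.span 𝕜 B))

instance : IsScalarTower ℝ 𝕜 (GaugeSpan 𝕜 B) :=
  inferInstanceAs (IsScalarTower ℝ 𝕜 (Submodule.span 𝕜 B))

lemma gauge_preimage_subtype (w : GaugeSpan 𝕜 B) :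
    gauge (subtype ⁻¹' B) w = gauge B (subtype w) := by
  simp only [gauge_def']
  rfl

lemma absorbent_preimage_subtype (hb : Balanced 𝕜 B) (hc : Convex ℝ B) (h0 : (0 : V) ∈ B) :
    Absorbent ℝ (subtype ⁻¹' B : Set (GaugeSpan 𝕜 B)) := by
  intro w
  obtain ⟨r, hr, hw⟩ := hb.exists_pos_mem_smul_of_mem_span hc h0 (subtype_mem w)
  rw [absorbs_iff_norm]
  refine ⟨r, fun c hrc => ?_⟩
  have hc0 : c ≠ 0 := norm_pos_iff.1 (hr.trans_le hrc)
  have hsub : r • B ⊆ c • B := by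
    rw [← IsScalarTower.algebraMap_smul 𝕜 r B, ← IsScalarTower.algebraMap_smul 𝕜 c B]
    refine hb.smul_mono ?_
    simpa [RCLike.algebraMap_eq_ofReal, abs_of_pos hr] using hrc
  rw [singleton_subset_iff, mem_smul_set_iff_inv_smul_mem₀ hc0, mem_preimage,
    LinearMap.map_smul_of_tower, ← mem_smul_set_iff_inv_smul_mem₀ hc0]
  exact hsub hw

end GaugeSpan

section BanachDisk

variable {𝕜 : Type} [RCLike 𝕜] {V : Type} [AddCommGroup V] [Module 𝕜 V] [Module ℝ V]
  [TopologicalSpace V] {B : Set V}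

lemma IsBanachDisk.isVonNBounded (hB : IsBanachDisk 𝕜 B) : IsVonNBounded 𝕜 B :=
  hB.2.2.1

open GaugeSpan in
theorem IsBanachDisk.exists_bound_of_pointwise_bounded [IsScalarTower ℝ 𝕜 V]
    (hB : IsBanachDisk 𝕜 B) {ι : Type} (φ : ι → V →ₗ[𝕜] 𝕜)
    (hφ : ∀ i, ∃ M, ∀ b ∈ B, ‖φ i b‖ ≤ M)
    (hpt : ∀ v ∈ Submodule.span 𝕜 B, ∃ C, ∀ i, ‖φ i v‖ ≤ C) :
    ∃ C, ∀ i, ∀ b ∈ B, ‖φ i b‖ ≤ C := by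
  obtain ⟨hb, hc, -, hcomplete⟩ := hB
  rcases B.eq_empty_or_nonempty with rfl | hne
  · exact ⟨0, by simp⟩
  have habs := absorbent_preimage_subtype hb hc (hb.zero_mem hne)
  let p : Seminorm 𝕜 (GaugeSpan 𝕜 B) :=
    gaugeSeminorm (hb.mulActionHom_preimage subtype.toMulActionHom)
      (hc.linear_preimage (subtype.restrictScalars ℝ)) habs
  let : SeminormedAddCommGroup (GaugeSpan 𝕜 B) := p.toAddGroupSeminorm.toSeminormedAddCommGroup
  let : NormedSpace 𝕜 (GaugeSpan 𝕜 B) := ⟨fun c v => (map_smul_eq_mul p c v).le⟩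
  have hnorm (w : GaugeSpan 𝕜 B) : ‖w‖ = gauge B (subtype w) := gauge_preimage_subtype w
  have : CompleteSpace (GaugeSpan 𝕜 B) := by
    refine Metric.complete_of_cauchySeq_tendsto fun u hu => ?_
    obtain ⟨v, hv, hlim⟩ := hcomplete (fun n => subtype (u n)) (fun n => subtype_mem (u n))
      fun ε hε => by simpa [dist_eq_norm, hnorm] using Metric.cauchySeq_iff.1 hu ε hε
    obtain ⟨w, rfl⟩ := exists_subtype_eq hv
    refine ⟨w, Metric.tendsto_atTop.2 fun ε hε => ?_⟩
    simpa [dist_eq_norm', hnorm] using hlim ε hε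
  choose M hM using hφ
  let ψ (i : ι) : GaugeSpan 𝕜 B →L[𝕜] 𝕜 :=
    ((φ i).comp subtype).mkContinuous (M i)
      (norm_apply_le_mul_gauge habs _ fun _ hb => hM i _ hb)
  obtain ⟨C, hC⟩ := banach_steinhaus (g := ψ) fun w => hpt (subtype w) (subtype_mem w)
  refine ⟨C, fun i b hbB => ?_⟩
  obtain ⟨w, rfl⟩ := exists_subtype_eq (Submodule.subset_span (R := 𝕜) hbB)
  have hw : ‖w‖ ≤ 1 := (hnorm w).trans_le (gauge_le_one_of_mem hbB)
  calc ‖φ i (subtype w)‖ = ‖ψ i w‖ := rfl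
    _ ≤ C := by simpa using (ψ i).le_of_opNorm_le_of_le (hC i) hw

end BanachDisk

section Bounded

variable {𝕜 : Type} [RCLike 𝕜] {E : Type} [AddCommGroup E] [Module 𝕜 E] [TopologicalSpace E]

lemma ContinuousLinearMap.exists_norm_apply_le (g : E →L[𝕜] 𝕜) {S : Set E}
    (hS : IsVonNBounded 𝕜 S) : ∃ C, ∀ v ∈ S, ‖g v‖ ≤ C := by
  simpa using ((NormedSpace.isVonNBounded_iff 𝕜).1 (hS.image g)).exists_norm_le

variable [ContinuousSMul 𝕜 E]

lemma Bornology.IsVonNBounded.exists_norm_apply_le {S' : Set (E →L[𝕜] 𝕜)}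
    (hS' : IsVonNBounded 𝕜 S') (v : E) : ∃ C, ∀ f ∈ S', ‖f v‖ ≤ C := by
  simpa using ((NormedSpace.isVonNBounded_iff 𝕜).1
    (ContinuousLinearMap.isVonNBounded_image2_apply hS' (isVonNBounded_singleton v))).exists_norm_le

variable [IsTopologicalAddGroup E] [T2Space E]

lemma IsFiniteRank.exists_eq_sum_smul {T : E →L[𝕜] E} (hT : IsFiniteRank 𝕜 T) :
    ∃ (n : ℕ) (e : Fin n → E) (f : Fin n → E →L[𝕜] 𝕜), ∀ v, T v = ∑ k, f k v • e k := by
  let W := LinearMap.range (T : E →ₗ[𝕜] E)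
  have : FiniteDimensional 𝕜 W := hT
  let b := Module.finBasis 𝕜 W
  let Tr : E →L[𝕜] W := T.codRestrict W fun v => LinearMap.mem_range_self _ v
  refine ⟨_, fun k => b k, fun k => (LinearMap.toContinuousLinearMap (b.coord k)).comp Tr,
    fun v => ?_⟩
  calc T v = ((Tr v : W) : E) := rfl
    _ = ((∑ k, b.repr (Tr v) k • b k : W) : E) := by rw [b.sum_repr]
    _ = _ := by simp only [Submodule.coe_sum, Submodule.coe_smul]; rfl

end Bounded

section Fredholm

variable {𝕜 : Type} [RCLike 𝕜] {E : Type} [AddCommGroup E] [Module 𝕜 E] [Module ℝ E]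
  [TopologicalSpace E] [ContinuousSMul 𝕜 E]

theorem exists_bound_pairing_of_isBanachDisk [IsScalarTower ℝ 𝕜 E] {ι : Type} {Aν : ι → E →ₗ[𝕜] E}
    (hw : ∀ ν, IsWeaklyContinuous 𝕜 (Aν ν))
    (hbd : ∀ (v : E) (f : E →L[𝕜] 𝕜), ∃ C : ℝ, ∀ ν, ‖f (Aν ν v)‖ ≤ C)
    {B : Set E} {B' : Set (E →L[𝕜] 𝕜)} (hB : IsBanachDisk 𝕜 B) (hB' : IsBanachDisk 𝕜 B') :
    ∃ C, ∀ ν, ∀ f ∈ B', ∀ b ∈ B, ‖f (Aν ν b)‖ ≤ C := by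
  have hpt (v : E) : ∃ C, ∀ ν, ∀ f ∈ B', ‖f (Aν ν v)‖ ≤ C := by
    obtain ⟨C, hC⟩ := hB'.exists_bound_of_pointwise_bounded
      (fun ν => (ContinuousLinearMap.coeLM 𝕜).flip (Aν ν v))
      (fun ν => hB'.isVonNBounded.exists_norm_apply_le (Aν ν v)) (fun f _ => hbd v f)
    exact ⟨C, fun ν f hf => hC ν f hf⟩
  choose Cv hCv using hpt
  obtain ⟨C, hC⟩ := hB.exists_bound_of_pointwise_bounded
    (fun p : ι × B' => (p.2 : E →L[𝕜] 𝕜).toLinearMap.comp (Aν p.1))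
    (fun p => (⟨_, hw p.1 p.2⟩ : E →L[𝕜] 𝕜).exists_norm_apply_le hB.isVonNBounded)
    (fun v _ => ⟨Cv v, fun p => hCv v p.1 p.2 p.2.2⟩)
  exact ⟨C, fun ν f hf b hb => hC (ν, ⟨f, hf⟩) b hb⟩

variable [IsTopologicalAddGroup E] {l : ℕ → 𝕜} {x : ℕ → E} {x' : ℕ → E →L[𝕜] 𝕜}

theorem FredholmKernelSeqs.summable_mul_apply (h : FredholmKernelSeqs 𝕜 l x x')
    (g : E →L[𝕜] 𝕜) (v : E) : Summable fun i => l i * x' i v * g (x i) := by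
  obtain ⟨hl, ⟨B, hB, hxB⟩, ⟨B', hB', hx'B'⟩⟩ := h
  obtain ⟨C₁, hC₁⟩ := hB'.isVonNBounded.exists_norm_apply_le v
  obtain ⟨C₂, hC₂⟩ := g.exists_norm_apply_le hB.isVonNBounded
  refine Summable.of_norm_bounded (hl.mul_right (C₁ * C₂)) fun i => ?_
  rw [norm_mul, norm_mul, mul_assoc]
  have h₁ := hC₁ _ (hx'B' i)
  exact mul_le_mul_of_nonneg_left
    (mul_le_mul h₁ (hC₂ _ (hxB i)) (norm_nonneg _) ((norm_nonneg _).trans h₁)) (norm_nonneg _)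

variable {A : E → E}

theorem FredholmRep.tsum_mul_apply (h : FredholmRep 𝕜 A l x x') (g : E →L[𝕜] 𝕜) (v : E) :
    ∑' i, l i * x' i v * g (x i) = g (A v) := by
  refine tendsto_nhds_unique (h.1.summable_mul_apply g v).hasSum.tendsto_sum_nat ?_
  simpa [Function.comp_def, map_sum] using (g.continuous.tendsto _).comp (h.2 v)

theorem FredholmRep.tsum_mul_apply_sum_smul (h : FredholmRep 𝕜 A l x x') {n : ℕ}
    (e : Fin n → E) (f : Fin n → E →L[𝕜] 𝕜) :
    ∑' i, l i * x' i (∑ k, f k (x i) • e k) = ∑ k, f k (A (e k)) := by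
  calc ∑' i, l i * x' i (∑ k, f k (x i) • e k) = ∑' i, ∑ k, l i * x' i (e k) * f k (x i) := by
        congr 1 with i
        simp only [map_sum, map_smul, smul_eq_mul, Finset.mul_sum]
        exact Finset.sum_congr rfl fun k _ => by ring
    _ = ∑ k, ∑' i, l i * x' i (e k) * f k (x i) :=
        Summable.tsum_finsetSum fun k _ => h.1.summable_mul_apply (f k) (e k)
    _ = ∑ k, f k (A (e k)) := Finset.sum_congr rfl fun k _ => h.tsum_mul_apply (f k) (e k)

theorem FredholmRep.tsum_mul_apply_eq_of_isFiniteRank [T2Space E] {μ : ℕ → 𝕜} {y : ℕ → E}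
    {y' : ℕ → E →L[𝕜] 𝕜} (h₁ : FredholmRep 𝕜 A l x x') (h₂ : FredholmRep 𝕜 A μ y y')
    {T : E →L[𝕜] E} (hT : IsFiniteRank 𝕜 T) :
    ∑' i, l i * x' i (T (x i)) = ∑' j, μ j * y' j (T (y j)) := by
  obtain ⟨n, e, f, hTe⟩ := hT.exists_eq_sum_smul
  simp only [hTe, h₁.tsum_mul_apply_sum_smul, h₂.tsum_mul_apply_sum_smul]

theorem FredholmKernelSeqs.tendsto_tsum_mul_apply [IsScalarTower ℝ 𝕜 E]
    (h : FredholmKernelSeqs 𝕜 l x x') {ι : Type} {lfil : Filter ι} {Aν : ι → E →ₗ[𝕜] E} (hw : ∀ ν, IsWeaklyContinuous 𝕜 (Aν ν))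
    {A : E →ₗ[𝕜] E} (hconv : ∀ (v : E) (f : E →L[𝕜] 𝕜),
      Tendsto (fun ν => f (Aν ν v)) lfil (𝓝 (f (A v))))
    (hbd : ∀ (v : E) (f : E →L[𝕜] 𝕜), ∃ C : ℝ, ∀ ν, ‖f (Aν ν v)‖ ≤ C) :
    Tendsto (fun ν => ∑' i, l i * x' i (Aν ν (x i))) lfil (𝓝 (∑' i, l i * x' i (A (x i)))) := by
  obtain ⟨hl, ⟨B, hB, hxB⟩, ⟨B', hB', hx'B'⟩⟩ := h
  obtain ⟨C, hC⟩ := exists_bound_pairing_of_isBanachDisk hw hbd hB hB'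
  refine tendsto_tsum_of_dominated_convergence (hl.mul_right C)
    (fun i => (hconv (x i) (x' i)).const_mul (l i)) (.of_forall fun ν i => ?_)
  rw [norm_mul]
  exact mul_le_mul_of_nonneg_left (hC ν _ (hx'B' i) _ (hxB i)) (norm_nonneg _)

end Fredholm

variable {𝕜 : Type} [RCLike 𝕜] {E : Type} [AddCommGroup E] [Module 𝕜 E]
  [UniformSpace E] [IsUniformAddGroup E] [ContinuousSMul 𝕜 E]
  [Module ℝ E] [IsScalarTower ℝ 𝕜 E] [LocallyConvexSpace ℝ E] [T2Space E]

/-- Suppose `E` possesses the bounded approximation property. Then the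
trace of every Fredholm operator on `E` is well-defined: any two Fredholm
representations of the same operator yield the same value `∑_{i=1}^∞ λ_i ⟨x'_i, x_i⟩`.
Moreover, if a net `{A_ν}` of weakly continuous operators converges to `A` in the weak
operator topology and is bounded in that topology, then `tr (F ∘ A_ν) → tr (F ∘ A)`
for every Fredholm operator `F` (where `tr (F ∘ C) = ∑_{i=1}^∞ λ_i ⟨x'_i, C x_i⟩`). -/
theorem statement13 (hbap : HasBAP 𝕜 E) :
    (∀ (A : E → E) (l : ℕ → 𝕜) (x : ℕ → E) (x' : ℕ → E →L[𝕜] 𝕜)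
        (μ : ℕ → 𝕜) (y : ℕ → E) (y' : ℕ → E →L[𝕜] 𝕜),
      FredholmRep 𝕜 A l x x' → FredholmRep 𝕜 A μ y y' →
      ∑' i, l i * x' i (x i) = ∑' j, μ j * y' j (y j)) ∧
    (∀ (ι : Type) (lfil : Filter ι), lfil.NeBot →
      ∀ (Aν : ι → E →ₗ[𝕜] E), (∀ ν, IsWeaklyContinuous 𝕜 (Aν ν)) →
      ∀ A : E →ₗ[𝕜] E,
        (∀ (v : E) (f : E →L[𝕜] 𝕜),
          Filter.Tendsto (fun ν => f (Aν ν v)) lfil (𝓝 (f (A v)))) →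
        (∀ (v : E) (f : E →L[𝕜] 𝕜), ∃ C : ℝ, ∀ ν, ‖f (Aν ν v)‖ ≤ C) →
        ∀ (F : E → E) (l : ℕ → 𝕜) (x : ℕ → E) (x' : ℕ → E →L[𝕜] 𝕜),
          FredholmRep 𝕜 F l x x' →
          Filter.Tendsto (fun ν => ∑' i, l i * x' i (Aν ν (x i))) lfil
            (𝓝 (∑' i, l i * x' i (A (x i))))) := by
  refine ⟨fun A l x x' μ y y' h₁ h₂ => ?_,
    fun ι lfil _ Aν hw A hconv hbd F l x x' h => h.1.tendsto_tsum_mul_apply hw hconv hbd⟩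
  obtain ⟨ι, lfil, T, hne, hT, hconv, hbd⟩ := hbap
  have hw (ν : ι) : IsWeaklyContinuous 𝕜 (T ν : E →ₗ[𝕜] E) := fun f => (f.comp (T ν)).continuous
  have h₁' := h₁.1.tendsto_tsum_mul_apply (A := LinearMap.id) hw hconv hbd
  have h₂' := h₂.1.tendsto_tsum_mul_apply (A := LinearMap.id) hw hconv hbd
  simp only [ContinuousLinearMap.coe_coe, h₁.tsum_mul_apply_eq_of_isFiniteRank h₂ (hT _)] at h₁'
  exact tendsto_nhds_unique h₁' h₂'
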